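/- arXiv:2403.04016 — 9 statements merged into one kernel-verified Lean document; each statement's English description precedes it below -/
import Mathlib

section
/- Let D ∈ ℝ^{m×m} satisfy ‖D‖ < 1, where ‖D‖ is the operator norm induced by the Euclidean norm. Then for every v ∈ ℝ^m there exists a unique w ∈ ℝ^m such that w = Φ(v + D w). -/
open Matrix

/-- The rectified linear unit (ReLU) map, applied componentwise. -/
noncomputable def relu {m : ℕ} (q : Fin m → ℝ) : Fin m → ℝ := fun i => max (q i) 0

/-- The operator norm of a matrix induced by the Euclidean norm on `ℝ^m`. -/
noncomputable def opNorm {m : ℕ} (D : Matrix (Fin m) (Fin m) ℝ) : ℝ :=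
  ‖Matrix.toEuclideanCLM (𝕜 := ℝ) D‖

/-! `Φ` is `1`-Lipschitz in each coordinate, hence in the Euclidean norm, so `w ↦ Φ(v + D w)` is
Lipschitz with constant `‖D‖ < 1`. The Banach fixed-point theorem then gives the unique `w`. -/

open WithLp
open scoped NNReal

lemma PiLp.lipschitzWith_map_of_L2 {ι : Type*} [Fintype ι] {β γ : ι → Type*}
    [∀ i, SeminormedAddCommGroup (β i)] [∀ i, SeminormedAddCommGroup (γ i)] {K : ℝ≥0}
    {f : ∀ i, β i → γ i} (hf : ∀ i, LipschitzWith K (f i)) :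
    LipschitzWith K fun x : PiLp 2 β => (toLp 2 fun i => f i (x i) : PiLp 2 γ) := by
  refine LipschitzWith.of_dist_le_mul fun x y => ?_
  rw [PiLp.dist_eq_of_L2, PiLp.dist_eq_of_L2, ← Real.sqrt_sq K.coe_nonneg,
    ← Real.sqrt_mul (by positivity), Finset.mul_sum]
  gcongr with i
  rw [← mul_pow]
  gcongr
  exact (hf i).dist_le_mul (x i) (y i)

lemma lipschitzWith_relu {m : ℕ} :
    LipschitzWith 1 fun x : EuclideanSpace ℝ (Fin m) =>
      (toLp 2 (relu (ofLp x)) : EuclideanSpace ℝ (Fin m)) :=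
  PiLp.lipschitzWith_map_of_L2 (f := fun _ t => max t 0) fun _ => LipschitzWith.id.max_const 0

lemma contractingWith_relu_affine {m : ℕ} {D : Matrix (Fin m) (Fin m) ℝ} (hD : opNorm D < 1)
    (v : Fin m → ℝ) :
    ContractingWith ‖toEuclideanCLM (𝕜 := ℝ) D‖₊ fun x : EuclideanSpace ℝ (Fin m) =>
      (toLp 2 (relu (v + D *ᵥ ofLp x)) : EuclideanSpace ℝ (Fin m)) := by
  have hAffine := (isometry_add_left (toLp 2 v : EuclideanSpace ℝ (Fin m))).lipschitz.comp
    (toEuclideanCLM (𝕜 := ℝ) D).lipschitz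
  have hLipschitz := lipschitzWith_relu.comp hAffine
  rw [one_mul, one_mul] at hLipschitz
  exact ⟨hD, hLipschitz⟩

/-- If `‖D‖ < 1` (operator norm induced by the Euclidean norm), then for every `v ∈ ℝ^m`
there exists a unique `w ∈ ℝ^m` such that `w = Φ(v + D w)`. -/
theorem existsUnique_relu_fixedPoint {m : ℕ} (D : Matrix (Fin m) (Fin m) ℝ)
    (hD : opNorm D < 1) (v : Fin m → ℝ) :
    ∃! w : Fin m → ℝ, w = relu (v + D.mulVec w) := by
  have hF := contractingWith_relu_affine hD v
  refine ⟨ofLp (ContractingWith.fixedPoint _ hF), congrArg ofLp hF.fixedPoint_isFixedPt.symm,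
    fun w hw => congrArg ofLp (hF.fixedPoint_unique (x := toLp 2 w) (congrArg (toLp 2) hw.symm))⟩
end

section
/- Let A ∈ ℝ^{n×n}, B ∈ ℝ^{n×m}, C ∈ ℝ^{m×n}, D ∈ ℝ^{m×m} with ‖D‖ < 1. The feedback system Σ is globally asymptotically stable if and only if it is locally asymptotically stable. -/
open Matrix Filter

/-- The Euclidean norm of a vector in `ℝ^n`. -/
noncomputable def enorm' {n : ℕ} (x : Fin n → ℝ) : ℝ :=
  ‖(WithLp.equiv 2 (Fin n → ℝ)).symm x‖

/-- A solution of the feedback system `Σ`. -/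
def IsSolution {n m : ℕ} (A : Matrix (Fin n) (Fin n) ℝ) (B : Matrix (Fin n) (Fin m) ℝ)
    (C : Matrix (Fin m) (Fin n) ℝ) (D : Matrix (Fin m) (Fin m) ℝ)
    (x : ℝ → Fin n → ℝ) : Prop :=
  ∃ w : ℝ → Fin m → ℝ, ∀ t ≥ (0:ℝ),
    w t = relu (C.mulVec (x t) + D.mulVec (w t)) ∧
    HasDerivAt x (A.mulVec (x t) + B.mulVec (w t)) t

/-- Condition (i): Lyapunov stability of the origin for `Σ`. -/
def LyapunovStable {n m : ℕ} (A : Matrix (Fin n) (Fin n) ℝ) (B : Matrix (Fin n) (Fin m) ℝ)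
    (C : Matrix (Fin m) (Fin n) ℝ) (D : Matrix (Fin m) (Fin m) ℝ) : Prop :=
  ∀ ε > (0:ℝ), ∃ δ > (0:ℝ), ∀ x : ℝ → Fin n → ℝ,
    IsSolution A B C D x → enorm' (x 0) < δ → ∀ t ≥ (0:ℝ), enorm' (x t) < ε

/-- Local asymptotic stability of the origin for `Σ`: conditions (i) and (ii). -/
def LocallyAsympStable {n m : ℕ} (A : Matrix (Fin n) (Fin n) ℝ) (B : Matrix (Fin n) (Fin m) ℝ)
    (C : Matrix (Fin m) (Fin n) ℝ) (D : Matrix (Fin m) (Fin m) ℝ) : Prop :=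
  LyapunovStable A B C D ∧
    ∃ δ > (0:ℝ), ∀ x : ℝ → Fin n → ℝ,
      IsSolution A B C D x → enorm' (x 0) < δ → Tendsto x atTop (nhds 0)

/-- Global asymptotic stability of the origin for `Σ`: conditions (i) and (iii). -/
def GloballyAsympStable {n m : ℕ} (A : Matrix (Fin n) (Fin n) ℝ) (B : Matrix (Fin n) (Fin m) ℝ)
    (C : Matrix (Fin m) (Fin n) ℝ) (D : Matrix (Fin m) (Fin m) ℝ) : Prop :=
  LyapunovStable A B C D ∧
    ∀ x : ℝ → Fin n → ℝ, IsSolution A B C D x → Tendsto x atTop (nhds 0)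

/-!
ReLU is positively homogeneous, so nonnegative multiples of solutions of `Σ` are again
solutions. Any solution can therefore be shrunk into the region of attraction given by local
asymptotic stability; the shrunken solution tends to `0`, hence so does the original one.
-/

lemma relu_smul_of_nonneg {m : ℕ} {c : ℝ} (hc : 0 ≤ c) (q : Fin m → ℝ) :
    relu (c • q) = c • relu q := by
  funext i
  simp only [relu, Pi.smul_apply, smul_eq_mul, mul_max_of_nonneg _ _ hc, mul_zero]

lemma enorm'_smul {n : ℕ} (c : ℝ) (v : Fin n → ℝ) : enorm' (c • v) = |c| * enorm' v := by
  simp only [enorm', WithLp.equiv_symm_apply, WithLp.toLp_smul, norm_smul, Real.norm_eq_abs]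

section FeedbackSystem

variable {n m : ℕ} {A : Matrix (Fin n) (Fin n) ℝ} {B : Matrix (Fin n) (Fin m) ℝ}
  {C : Matrix (Fin m) (Fin n) ℝ} {D : Matrix (Fin m) (Fin m) ℝ}

lemma IsSolution.smul {x : ℝ → Fin n → ℝ} (hx : IsSolution A B C D x) {c : ℝ} (hc : 0 ≤ c) :
    IsSolution A B C D (c • x) := by
  obtain ⟨w, hw⟩ := hx
  refine ⟨c • w, fun t ht => ⟨?_, ?_⟩⟩
  · simp only [Pi.smul_apply, mulVec_smul, ← smul_add, relu_smul_of_nonneg hc, ← (hw t ht).1]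
  · simpa only [Pi.smul_apply, mulVec_smul, smul_add] using (hw t ht).2.const_smul c

theorem IsSolution.tendsto_zero_of_local_attraction {x : ℝ → Fin n → ℝ}
    (hx : IsSolution A B C D x)
    (hloc : ∃ δ > (0:ℝ), ∀ y : ℝ → Fin n → ℝ,
      IsSolution A B C D y → enorm' (y 0) < δ → Tendsto y atTop (nhds 0)) :
    Tendsto x atTop (nhds 0) := by
  obtain ⟨δ, hδ, hattr⟩ := hloc
  obtain ⟨c, hc, hcx⟩ := exists_pos_mul_lt hδ (enorm' (x 0))
  have hsmall : enorm' ((c • x) 0) < δ := by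
    rwa [Pi.smul_apply, enorm'_smul, abs_of_pos hc, mul_comm]
  have hscaled : Tendsto (c • x) atTop (nhds (c • 0)) := by
    simpa only [smul_zero] using hattr _ (hx.smul hc.le) hsmall
  exact (tendsto_const_smul_iff₀ hc.ne').mp hscaled

end FeedbackSystem

theorem globallyAsympStable_iff_locallyAsympStable_general {n m : ℕ}
    (A : Matrix (Fin n) (Fin n) ℝ) (B : Matrix (Fin n) (Fin m) ℝ)
    (C : Matrix (Fin m) (Fin n) ℝ) (D : Matrix (Fin m) (Fin m) ℝ) :
    GloballyAsympStable A B C D ↔ LocallyAsympStable A B C D :=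
  ⟨fun ⟨hstable, hglobal⟩ => ⟨hstable, 1, one_pos, fun x hx _ => hglobal x hx⟩,
    fun ⟨hstable, hloc⟩ => ⟨hstable, fun _ hx => hx.tendsto_zero_of_local_attraction hloc⟩⟩

/-- The feedback system `Σ` is globally asymptotically stable if and only if it is
locally asymptotically stable. -/
theorem globallyAsympStable_iff_locallyAsympStable {n m : ℕ}
    (A : Matrix (Fin n) (Fin n) ℝ) (B : Matrix (Fin n) (Fin m) ℝ)
    (C : Matrix (Fin m) (Fin n) ℝ) (D : Matrix (Fin m) (Fin m) ℝ)
    (hD : opNorm D < 1) :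
    GloballyAsympStable A B C D ↔ LocallyAsympStable A B C D :=
  globallyAsympStable_iff_locallyAsympStable_general A B C D
end

section
/- With Φ the ReLU map on ℝ^m, one has the inclusions Π_NN ⊆ Π_COP ⊆ Π^*: every matrix of the form E^T (Q + 𝒥(J)) E with Q symmetric and entrywise nonnegative lies in Π_COP, and every matrix of the form E^T (Q + 𝒥(J)) E with Q copositive satisfies (ζ, Φ(ζ))^T Π (ζ, Φ(ζ)) ≥ 0 for all ζ ∈ ℝ^m. -/
open Matrix

/-- The block matrix `E = [[-I, I],[0, I]]`. -/
def Emat (m : ℕ) : Matrix (Fin m ⊕ Fin m) (Fin m ⊕ Fin m) ℝ :=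
  fromBlocks (-1) 1 0 1

/-- The block matrix `𝒥(J) = [[0, J],[J, 0]]`. -/
def calJ {m : ℕ} (J : Matrix (Fin m) (Fin m) ℝ) : Matrix (Fin m ⊕ Fin m) (Fin m ⊕ Fin m) ℝ :=
  fromBlocks 0 J J 0

/-- A symmetric matrix `Q` is copositive if `vᵀ Q v ≥ 0` for all entrywise nonnegative `v`. -/
def Copositive {k : Type*} [Fintype k] (Q : Matrix k k ℝ) : Prop :=
  ∀ v : k → ℝ, (∀ i, 0 ≤ v i) → 0 ≤ v ⬝ᵥ Q.mulVec v

/-- The multiplier class `Π_COP`. -/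
def PiCOP (m : ℕ) : Set (Matrix (Fin m ⊕ Fin m) (Fin m ⊕ Fin m) ℝ) :=
  {P | ∃ (Q : Matrix (Fin m ⊕ Fin m) (Fin m ⊕ Fin m) ℝ) (J : Matrix (Fin m) (Fin m) ℝ),
    J.IsDiag ∧ Q.IsSymm ∧ Copositive Q ∧ P = (Emat m)ᵀ * (Q + calJ J) * Emat m}

/-!
The change of variables `w = E (ζ, Φ ζ) = (Φ ζ - ζ, Φ ζ)` turns the quadratic form of
`Eᵀ (Q + 𝒥(J)) E` at `(ζ, Φ ζ)` into that of `Q + 𝒥(J)` at `w`. Both halves of `w` are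
nonnegative, so the `Q`-part is nonnegative by copositivity, and they are complementary
(`(Φ ζ - ζ)ᵢ (Φ ζ)ᵢ = 0`), so the `𝒥(J)`-part vanishes because `J` is diagonal.
-/

theorem Copositive.of_nonneg {k : Type*} [Fintype k] {Q : Matrix k k ℝ}
    (hQ : ∀ i j, 0 ≤ Q i j) : Copositive Q := fun _ hv =>
  Finset.sum_nonneg fun i _ =>
    mul_nonneg (hv i) (Finset.sum_nonneg fun j _ => mul_nonneg (hQ i j) (hv j))

theorem Matrix.dotProduct_transpose_mul_mul_mulVec {R k l : Type*} [CommRing R]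
    [Fintype k] [Fintype l] (A : Matrix k l R) (M : Matrix k k R) (v : l → R) :
    v ⬝ᵥ (Aᵀ * M * A) *ᵥ v = (A *ᵥ v) ⬝ᵥ M *ᵥ (A *ᵥ v) := by
  rw [← mulVec_mulVec, ← mulVec_mulVec, dotProduct_mulVec, vecMul_transpose]

theorem Matrix.IsDiag.dotProduct_mulVec_eq_zero {R n : Type*} [CommRing R] [Fintype n]
    {J : Matrix n n R} (hJ : J.IsDiag) {a b : n → R} (hab : ∀ i, a i * b i = 0) :
    a ⬝ᵥ J *ᵥ b = 0 := by
  classical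
  rw [← hJ.diagonal_diag]
  simp only [dotProduct, mulVec_diagonal]
  exact Finset.sum_eq_zero fun i _ => by
    simp only [mul_left_comm (a i), hab i, mul_zero]

theorem Emat_mulVec_sumElim {m : ℕ} (x y : Fin m → ℝ) :
    Emat m *ᵥ Sum.elim x y = Sum.elim (y - x) y := by
  rw [Emat, fromBlocks_mulVec]
  simp [neg_mulVec, sub_eq_neg_add]

theorem sumElim_dotProduct_calJ_mulVec {m : ℕ} (J : Matrix (Fin m) (Fin m) ℝ)
    (a b : Fin m → ℝ) :
    Sum.elim a b ⬝ᵥ calJ J *ᵥ Sum.elim a b = a ⬝ᵥ J *ᵥ b + b ⬝ᵥ J *ᵥ a := by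
  simp [calJ, fromBlocks_mulVec, sumElim_dotProduct_sumElim]

theorem relu_nonneg {m : ℕ} (ζ : Fin m → ℝ) (i : Fin m) : 0 ≤ relu ζ i :=
  le_max_right _ _

theorem relu_sub_self_nonneg {m : ℕ} (ζ : Fin m → ℝ) (i : Fin m) : 0 ≤ relu ζ i - ζ i :=
  sub_nonneg.mpr (le_max_left _ _)

theorem relu_sub_self_mul_relu {m : ℕ} (ζ : Fin m → ℝ) (i : Fin m) :
    (relu ζ i - ζ i) * relu ζ i = 0 := by
  rcases le_total (ζ i) 0 with h | h <;> simp [relu, h]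

theorem dotProduct_add_calJ_mulVec_nonneg {m : ℕ}
    {Q : Matrix (Fin m ⊕ Fin m) (Fin m ⊕ Fin m) ℝ} {J : Matrix (Fin m) (Fin m) ℝ}
    (hQ : Copositive Q) (hJ : J.IsDiag) {a b : Fin m → ℝ} (ha : ∀ i, 0 ≤ a i)
    (hb : ∀ i, 0 ≤ b i) (hab : ∀ i, a i * b i = 0) :
    0 ≤ Sum.elim a b ⬝ᵥ (Q + calJ J) *ᵥ Sum.elim a b := by
  have hQ_part : 0 ≤ Sum.elim a b ⬝ᵥ Q *ᵥ Sum.elim a b :=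
    hQ _ fun i => i.rec ha hb
  have hJ_part : Sum.elim a b ⬝ᵥ calJ J *ᵥ Sum.elim a b = 0 := by
    rw [sumElim_dotProduct_calJ_mulVec, hJ.dotProduct_mulVec_eq_zero hab,
      hJ.dotProduct_mulVec_eq_zero fun i => (mul_comm _ _).trans (hab i), add_zero]
  rw [add_mulVec, dotProduct_add, hJ_part, add_zero]
  exact hQ_part

/-- `Π_NN ⊆ Π_COP ⊆ Π^*`: every matrix `Eᵀ (Q + 𝒥(J)) E` with `Q` symmetric and
entrywise nonnegative lies in `Π_COP`, and every matrix `Eᵀ (Q + 𝒥(J)) E` with `Q`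
symmetric copositive satisfies `(ζ, Φ(ζ))ᵀ Π (ζ, Φ(ζ)) ≥ 0` for all `ζ ∈ ℝ^m`. -/
theorem piNN_subset_piCOP_subset_piStar {m : ℕ}
    (Q : Matrix (Fin m ⊕ Fin m) (Fin m ⊕ Fin m) ℝ) (J : Matrix (Fin m) (Fin m) ℝ)
    (hJ : J.IsDiag) (hQsymm : Q.IsSymm) :
    ((∀ i j, 0 ≤ Q i j) → (Emat m)ᵀ * (Q + calJ J) * Emat m ∈ PiCOP m) ∧
    (Copositive Q → ∀ ζ : Fin m → ℝ,
      0 ≤ (Sum.elim ζ (relu ζ)) ⬝ᵥ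
        (((Emat m)ᵀ * (Q + calJ J) * Emat m).mulVec (Sum.elim ζ (relu ζ)))) := by
  refine ⟨fun hQ => ⟨Q, J, hJ, hQsymm, Copositive.of_nonneg hQ, rfl⟩, fun hQ ζ => ?_⟩
  rw [dotProduct_transpose_mul_mul_mulVec, Emat_mulVec_sumElim]
  exact dotProduct_add_calJ_mulVec_nonneg hQ hJ (relu_sub_self_nonneg ζ) (relu_nonneg ζ)
    (relu_sub_self_mul_relu ζ)
end

section
/- Let a, b ∈ ℝ^n with a ≠ 0. The matrix a b^T + b a^T is positive semidefinite if and only if there exists λ ≥ 0 such that b = λ a. -/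
/-!
The quadratic form of `a bᵀ + b aᵀ` is `x ↦ 2 (a ⬝ x) (b ⬝ x)`. If a product of two linear forms
is nonnegative everywhere and the first form is nonzero, its kernel lies in the kernel of the
second, so the second is a multiple of the first, and the multiple is nonnegative.
-/

open Matrix

theorem LinearMap.exists_nonneg_smul_eq_of_forall_mul_nonneg {K V : Type*} [Field K]
    [LinearOrder K] [IsStrictOrderedRing K] [AddCommGroup V] [Module K V]
    {f g : V →ₗ[K] K} (hf : f ≠ 0) (hfg : ∀ x, 0 ≤ f x * g x) :
    ∃ l : K, 0 ≤ l ∧ g = l • f := by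
  obtain ⟨y, hy⟩ : ∃ y, f y ≠ 0 := by simpa [LinearMap.ext_iff] using hf
  have hker : ker f ≤ ker g := by
    intro z hz
    rw [LinearMap.mem_ker] at hz ⊢
    by_contra hgz
    -- moving from `y` along `z ∈ ker f` keeps `f = f y` and can make `g = -f y`
    have := hfg (y - ((f y + g y) / g z) • z)
    simp only [map_sub, map_smul, hz, smul_eq_mul, mul_zero, sub_zero] at this
    field_simp at this
    nlinarith [mul_self_pos.2 hy]
  obtain ⟨l, rfl⟩ : ∃ l : K, l • f = g := by
    have := mem_span_of_iInf_ker_le_ker (L := fun _ : Unit ↦ f) (by simpa using hker)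
    rwa [Set.range_const, Submodule.mem_span_singleton] at this
  refine ⟨l, ?_, rfl⟩
  have := hfg y
  simp only [LinearMap.smul_apply, smul_eq_mul] at this
  nlinarith [mul_self_pos.2 hy]

theorem dotProduct_mulVec_vecMulVec_add_vecMulVec {m R : Type*} [Fintype m] [CommRing R]
    (a b x : m → R) :
    x ⬝ᵥ ((vecMulVec a b + vecMulVec b a) *ᵥ x) = 2 * ((a ⬝ᵥ x) * (b ⬝ᵥ x)) := by
  rw [add_mulVec, vecMulVec_mulVec, vecMulVec_mulVec, op_smul_eq_smul, op_smul_eq_smul,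
    dotProduct_add, dotProduct_smul, dotProduct_smul, smul_eq_mul, smul_eq_mul,
    dotProduct_comm x a, dotProduct_comm x b]
  ring

theorem posSemidef_vecMulVec_add_vecMulVec_iff {m : Type*} [Fintype m] (a b : m → ℝ) :
    (vecMulVec a b + vecMulVec b a).PosSemidef ↔ ∀ x, 0 ≤ (a ⬝ᵥ x) * (b ⬝ᵥ x) := by
  have hherm : (vecMulVec a b + vecMulVec b a).IsHermitian := by
    simp only [IsHermitian, conjTranspose_add, conjTranspose_vecMulVec, star_trivial, add_comm]
  simp only [posSemidef_iff_dotProduct_mulVec, star_trivial,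
    dotProduct_mulVec_vecMulVec_add_vecMulVec, hherm, true_and]
  exact forall_congr' fun _ ↦ mul_nonneg_iff_of_pos_left two_pos

/-- For `a, b ∈ ℝ^n` with `a ≠ 0`, the matrix `a bᵀ + b aᵀ` is positive semidefinite
if and only if there exists `λ ≥ 0` such that `b = λ a`. -/
theorem posSemidef_outer_sym_iff {n : ℕ} (a b : Fin n → ℝ) (ha : a ≠ 0) :
    (vecMulVec a b + vecMulVec b a).PosSemidef ↔ ∃ l : ℝ, 0 ≤ l ∧ b = l • a := by
  rw [posSemidef_vecMulVec_add_vecMulVec_iff]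
  constructor
  · intro h
    have hf : dotProductBilin ℝ ℝ a ≠ 0 := fun h0 ↦
      ha (dotProduct_eq _ _ fun x ↦ by simpa using LinearMap.congr_fun h0 x)
    obtain ⟨l, hl, hba⟩ := LinearMap.exists_nonneg_smul_eq_of_forall_mul_nonneg hf
      (g := dotProductBilin ℝ ℝ b) h
    exact ⟨l, hl, dotProduct_eq _ _ fun x ↦ by simpa using LinearMap.congr_fun hba x⟩
  · rintro ⟨l, hl, rfl⟩ x
    rw [smul_dotProduct, smul_eq_mul, mul_left_comm]
    exact mul_nonneg hl (mul_self_nonneg _)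
end

section
/- Let D ∈ ℝ^{m×m} with ‖D‖ < 1, where ‖D‖ is the operator norm induced by the Euclidean norm. If w ∈ ℝ^m satisfies (w − D w) ⊙ w = 0, then w = 0. -/
open Matrix

open RCLike in
theorem ContinuousLinearMap.eq_zero_of_norm_sq_le_re_inner_apply_self {𝕜 E : Type*} [RCLike 𝕜]
    [NormedAddCommGroup E] [InnerProductSpace 𝕜 E] {T : E →L[𝕜] E} (hT : ‖T‖ < 1) {x : E}
    (hx : ‖x‖ ^ 2 ≤ re (inner 𝕜 (T x) x)) : x = 0 := by
  by_contra hx0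
  have : ‖x‖ ^ 2 < ‖x‖ ^ 2 := calc
    ‖x‖ ^ 2 ≤ re (inner 𝕜 (T x) x) := hx
    _ ≤ ‖T x‖ * ‖x‖ := re_inner_le_norm _ _
    _ ≤ ‖T‖ * ‖x‖ * ‖x‖ := by gcongr; exact T.le_opNorm x
    _ < ‖x‖ ^ 2 := by rw [mul_assoc, ← sq]; exact mul_lt_of_lt_one_left (by positivity) hT
  exact this.false

theorem dotProduct_self_eq_of_hadamard_sub_eq_zero {ι R : Type*} [Fintype ι] [CommRing R]
    {u w : ι → R} (h : ∀ i, (w i - u i) * w i = 0) : w ⬝ᵥ w = u ⬝ᵥ w := by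
  rw [← sub_eq_zero, ← sub_dotProduct]
  exact Finset.sum_eq_zero fun i _ => h i

/-- If `‖D‖ < 1` and `(w − D w) ⊙ w = 0` entrywise, then `w = 0`. -/
theorem eq_zero_of_hadamard_eq_zero {m : ℕ} (D : Matrix (Fin m) (Fin m) ℝ)
    (hD : opNorm D < 1) (w : Fin m → ℝ)
    (hw : ∀ i, (w i - D.mulVec w i) * w i = 0) : w = 0 := by
  have hquad : ‖WithLp.toLp 2 w‖ ^ 2 ≤ RCLike.re
      (inner ℝ (toEuclideanCLM (𝕜 := ℝ) D (WithLp.toLp 2 w)) (WithLp.toLp 2 w)) := by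
    rw [← real_inner_self_eq_norm_sq, toEuclideanCLM_toLp, EuclideanSpace.inner_toLp_toLp,
      EuclideanSpace.inner_toLp_toLp, star_trivial, star_trivial, RCLike.re_to_real,
      dotProduct_self_eq_of_hadamard_sub_eq_zero hw, dotProduct_comm]
  simpa using (toEuclideanCLM (𝕜 := ℝ) D).eq_zero_of_norm_sq_le_re_inner_apply_self hD hquad
end

section
/- Let A ∈ ℝ^{n×n}, B ∈ ℝ^{n×m}, C ∈ ℝ^{m×n}, D ∈ ℝ^{m×m} with ‖D‖ < 1. Suppose H ∈ S^{n+m} is positive semidefinite, nonzero, of rank one, and satisfies the dual LMI constraints: writing H = [[H11, H12],[H12^T, H22]], the matrix A H11 + B H12^T + (A H11 + B H12^T)^T is positive semidefinite, the matrix [[-C, I_m − D],[0, I_m]] H [[-C, I_m − D],[0, I_m]]^T has all entries nonnegative, and every diagonal entry of −C H12 + (I_m − D) H22 is zero. Then there exist x ∈ ℝ^n, w ∈ ℝ^m and λ ∈ ℝ such that H = (x, w)(x, w)^T, w ≥ 0 entrywise, x ≠ 0, λ ≥ 0, A x + B w = λ x, and w = Φ(C x + D w). -/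
open Matrix

/-!
Factor the rank-one positive semidefinite matrix as `H = v vᵀ` with `v = (x, w)`. Writing
`M = [[-C, I - D], [0, I]]`, the second constraint says that `(M v)(M v)ᵀ` is entrywise
nonnegative, so after replacing `v` by `-v` we get `M v = (w - C x - D w, w) ≥ 0`; the third
constraint adds `(w - C x - D w)ᵢ wᵢ = 0`, and these complementarity conditions say exactly
`w = Φ(C x + D w)`. If `x = 0`, then `‖w‖ = ‖Φ(D w)‖ ≤ ‖D‖ ‖w‖` forces `w = 0`, so `H = 0`
would have rank zero. Finally, with `y = A x + B w`, the first constraint reads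
`(x ⬝ z)(y ⬝ z) ≥ 0` for all `z`, which forces `y` to be a nonnegative multiple of `x`; the same
fact, applied to `H = e cᵀ`, gives the symmetric rank-one factorization.
-/

theorem exists_nonneg_smul_eq_of_forall_dotProduct_mul_nonneg {ι : Type*} [Fintype ι]
    {x y : ι → ℝ} (hx : x ≠ 0) (h : ∀ z, 0 ≤ (x ⬝ᵥ z) * (y ⬝ᵥ z)) :
    ∃ l : ℝ, 0 ≤ l ∧ y = l • x := by
  set a := x ⬝ᵥ x
  have ha : 0 < a := by simpa using dotProduct_self_star_pos_iff.mpr hx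
  set l := (x ⬝ᵥ y) / a
  set r := y - l • x
  have hxr : x ⬝ᵥ r = 0 := by
    simp only [r, dotProduct_sub, dotProduct_smul, smul_eq_mul, l]
    field_simp
    ring
  -- Testing against `z = ρ x - (l a + 1) r` gives `(x ⬝ᵥ z) (y ⬝ᵥ z) = -ρ² a`.
  have hr : r = 0 := by
    by_contra hr
    set ρ := r ⬝ᵥ r
    have hρ : 0 < ρ := by simpa using dotProduct_self_star_pos_iff.mpr hr
    have hz := h (ρ • x - (l * a + 1) • r)
    rw [show y = l • x + r by simp [r]] at hz
    simp only [dotProduct_sub, dotProduct_smul, add_dotProduct, smul_dotProduct, smul_eq_mul,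
      hxr, dotProduct_comm r x, mul_zero, add_zero] at hz
    rw [show x ⬝ᵥ x = a from rfl, show r ⬝ᵥ r = ρ from rfl] at hz
    nlinarith [mul_pos (mul_pos hρ hρ) ha]
  refine ⟨l, ?_, by simpa [r, sub_eq_zero] using hr⟩
  have := h x
  rw [dotProduct_comm y x] at this
  exact div_nonneg (nonneg_of_mul_nonneg_right this ha) ha.le

namespace Matrix

variable {ι κ : Type*}

theorem exists_eq_vecMulVec_of_rank_eq_one {K : Type*} [Field K] [Fintype κ]
    {H : Matrix ι κ K} (h : H.rank = 1) : ∃ e c, H = vecMulVec e c := by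
  rw [rank_eq_finrank_span_cols, finrank_eq_one_iff'] at h
  obtain ⟨e, -, he⟩ := h
  choose c hc using fun j => he ⟨H.col j, Submodule.subset_span ⟨j, rfl⟩⟩
  refine ⟨e, c, Matrix.ext fun i j => ?_⟩
  have := congrArg (fun v : Submodule.span K (Set.range H.col) => (v : ι → K) i) (hc j)
  simpa [vecMulVec_apply, mul_comm] using this.symm

theorem dotProduct_mulVec_vecMulVec [Fintype ι] (a b z : ι → ℝ) :
    z ⬝ᵥ (vecMulVec a b *ᵥ z) = (a ⬝ᵥ z) * (b ⬝ᵥ z) := by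
  rw [vecMulVec_mulVec, op_smul_eq_smul, dotProduct_smul, smul_eq_mul, dotProduct_comm z a,
    mul_comm]

theorem PosSemidef.dotProduct_mul_dotProduct_nonneg [Fintype ι] {a b : ι → ℝ}
    (h : (vecMulVec a b).PosSemidef) (z : ι → ℝ) : 0 ≤ (a ⬝ᵥ z) * (b ⬝ᵥ z) := by
  simpa [dotProduct_mulVec_vecMulVec] using h.dotProduct_mulVec_nonneg z

theorem PosSemidef.dotProduct_mul_dotProduct_nonneg_of_add [Fintype ι] {a b : ι → ℝ}
    (h : (vecMulVec a b + vecMulVec b a).PosSemidef) (z : ι → ℝ) :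
    0 ≤ (a ⬝ᵥ z) * (b ⬝ᵥ z) := by
  have := h.dotProduct_mulVec_nonneg z
  simp only [star_trivial, add_mulVec, dotProduct_add, dotProduct_mulVec_vecMulVec] at this
  linarith

theorem PosSemidef.exists_eq_vecMulVec_self_of_rank_eq_one [Fintype ι] {H : Matrix ι ι ℝ}
    (hH : H.PosSemidef) (hr : H.rank = 1) : ∃ v, H = vecMulVec v v := by
  obtain ⟨e, c, rfl⟩ := exists_eq_vecMulVec_of_rank_eq_one hr
  have he : e ≠ 0 := by rintro rfl; simp at hr
  obtain ⟨t, ht, rfl⟩ :=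
    exists_nonneg_smul_eq_of_forall_dotProduct_mul_nonneg he hH.dotProduct_mul_dotProduct_nonneg
  refine ⟨√t • e, ?_⟩
  simp only [vecMulVec_smul, smul_vecMulVec, smul_smul, Real.mul_self_sqrt ht]

theorem nonneg_or_nonpos_of_forall_vecMulVec_self_nonneg {u : ι → ℝ}
    (h : ∀ i j, 0 ≤ vecMulVec u u i j) : 0 ≤ u ∨ u ≤ 0 := by
  by_contra! hu
  obtain ⟨i, hi⟩ : ∃ i, u i < 0 := by simpa [Pi.le_def] using hu.1
  obtain ⟨j, hj⟩ : ∃ j, 0 < u j := by simpa [Pi.le_def] using hu.2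
  nlinarith [h i j, vecMulVec_apply u u i j]

theorem mul_vecMulVec_mul_transpose [Fintype ι] [Fintype κ] {α : Type*} [CommSemiring α]
    (M : Matrix κ ι α) (u v : ι → α) : M * vecMulVec u v * Mᵀ = vecMulVec (M *ᵥ u) (M *ᵥ v) := by
  rw [mul_vecMulVec, vecMulVec_mul, vecMul_transpose]

theorem vecMulVec_sumElim {α : Type*} [Mul α] {ι' κ' : Type*} (a : ι → α) (b : ι' → α)
    (c : κ → α) (d : κ' → α) :
    vecMulVec (Sum.elim a b) (Sum.elim c d) =
      fromBlocks (vecMulVec a c) (vecMulVec a d) (vecMulVec b c) (vecMulVec b d) := by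
  ext (i | i) (j | j) <;> rfl

theorem exists_vecMulVec_self_eq_and_mulVec_nonneg [Fintype ι] [Fintype κ]
    (M : Matrix κ ι ℝ) (v : ι → ℝ) (h : ∀ i j, 0 ≤ (M * vecMulVec v v * Mᵀ) i j) :
    ∃ v', vecMulVec v' v' = vecMulVec v v ∧ 0 ≤ M *ᵥ v' := by
  rw [mul_vecMulVec_mul_transpose] at h
  rcases nonneg_or_nonpos_of_forall_vecMulVec_self_nonneg h with hv | hv
  · exact ⟨v, rfl, hv⟩
  · exact ⟨-v, by simp, by simpa [mulVec_neg] using hv⟩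

end Matrix

theorem eq_relu_of_complementarity {m : ℕ} {w q : Fin m → ℝ} (hw : 0 ≤ w) (hq : q ≤ w)
    (hc : ∀ i, (w i - q i) * w i = 0) : w = relu q := by
  funext i
  rcases mul_eq_zero.mp (hc i) with h | h
  · rw [relu, ← sub_eq_zero.mp h]
    exact (max_eq_left (hw i)).symm
  · rw [relu, h, max_eq_right (h ▸ hq i)]

theorem norm_toLp_relu_le {m : ℕ} (q : Fin m → ℝ) :
    ‖WithLp.toLp 2 (relu q)‖ ≤ ‖WithLp.toLp 2 q‖ := by
  rw [EuclideanSpace.norm_eq, EuclideanSpace.norm_eq]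
  gcongr with i
  simpa [relu] using abs_max_le_max_abs_abs (a := q i) (b := 0)

theorem eq_zero_of_eq_relu_mulVec {m : ℕ} {D : Matrix (Fin m) (Fin m) ℝ} (hD : opNorm D < 1)
    {w : Fin m → ℝ} (hw : w = relu (D *ᵥ w)) : w = 0 := by
  have hle : ‖WithLp.toLp 2 w‖ ≤ opNorm D * ‖WithLp.toLp 2 w‖ := calc
    ‖WithLp.toLp 2 w‖ = ‖WithLp.toLp 2 (relu (D *ᵥ w))‖ := by rw [← hw]
    _ ≤ ‖WithLp.toLp 2 (D *ᵥ w)‖ := norm_toLp_relu_le _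
    _ = ‖toEuclideanCLM (𝕜 := ℝ) D (WithLp.toLp 2 w)‖ := by rw [toEuclideanCLM_toLp]
    _ ≤ opNorm D * ‖WithLp.toLp 2 w‖ := ContinuousLinearMap.le_opNorm _ _
  have : ‖WithLp.toLp 2 w‖ = 0 := by nlinarith [norm_nonneg (WithLp.toLp 2 w)]
  simpa using this

theorem dual_rank_one_extraction_general {n m : ℕ}
    (A : Matrix (Fin n) (Fin n) ℝ) (B : Matrix (Fin n) (Fin m) ℝ)
    (C : Matrix (Fin m) (Fin n) ℝ) (D : Matrix (Fin m) (Fin m) ℝ)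
    (hD : opNorm D < 1)
    (H11 : Matrix (Fin n) (Fin n) ℝ) (H12 : Matrix (Fin n) (Fin m) ℝ)
    (H22 : Matrix (Fin m) (Fin m) ℝ)
    (hPSD : (fromBlocks H11 H12 H12ᵀ H22).PosSemidef)
    (hrank : (fromBlocks H11 H12 H12ᵀ H22).rank = 1)
    (h1 : (A * H11 + B * H12ᵀ + (A * H11 + B * H12ᵀ)ᵀ).PosSemidef)
    (h2 : ∀ i j, 0 ≤ (fromBlocks (-C) (1 - D) 0 (1 : Matrix (Fin m) (Fin m) ℝ) *
        fromBlocks H11 H12 H12ᵀ H22 *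
        (fromBlocks (-C) (1 - D) 0 (1 : Matrix (Fin m) (Fin m) ℝ))ᵀ) i j)
    (h3 : ∀ i : Fin m, ((-C) * H12 + (1 - D) * H22 : Matrix (Fin m) (Fin m) ℝ) i i = 0) :
    ∃ (x : Fin n → ℝ) (w : Fin m → ℝ) (l : ℝ),
      fromBlocks H11 H12 H12ᵀ H22 = vecMulVec (Sum.elim x w) (Sum.elim x w) ∧
      (∀ i, 0 ≤ w i) ∧ x ≠ 0 ∧ 0 ≤ l ∧
      A.mulVec x + B.mulVec w = l • x ∧
      w = relu (C.mulVec x + D.mulVec w) := by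
  obtain ⟨v₀, hv₀⟩ := hPSD.exists_eq_vecMulVec_self_of_rank_eq_one hrank
  obtain ⟨v, hvv, hMv⟩ := exists_vecMulVec_self_eq_and_mulVec_nonneg _ v₀ (hv₀ ▸ h2)
  rw [← hvv] at hv₀
  have hv : v ≠ 0 := by rintro rfl; simp [hv₀] at hrank
  obtain ⟨x, w, rfl⟩ : ∃ x w, v = Sum.elim x w := ⟨_, _, (Sum.elim_comp_inl_inr v).symm⟩
  obtain ⟨rfl, rfl, -, rfl⟩ := fromBlocks_inj.mp (hv₀.trans (vecMulVec_sumElim x w x w))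
  rw [fromBlocks_mulVec] at hMv
  simp only [Sum.elim_comp_inl, Sum.elim_comp_inr, zero_mulVec, one_mulVec, zero_add] at hMv
  set u := (-C) *ᵥ x + (1 - D) *ᵥ w
  have hu : u = w - (C *ᵥ x + D *ᵥ w) := by
    simp only [u, sub_mulVec, neg_mulVec, one_mulVec]
    abel
  have hw : 0 ≤ w := fun i => hMv (Sum.inr i)
  have hq : C *ᵥ x + D *ᵥ w ≤ w := sub_nonneg.mp (hu ▸ fun i => hMv (Sum.inl i))
  have huw : ∀ i, u i * w i = 0 := by
    simpa only [mul_vecMulVec, ← add_vecMulVec, vecMulVec_apply] using h3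
  have hrelu : w = relu (C *ᵥ x + D *ᵥ w) :=
    eq_relu_of_complementarity hw hq fun i => by simpa [hu] using huw i
  have hx : x ≠ 0 := by
    rintro rfl
    obtain rfl : w = 0 := eq_zero_of_eq_relu_mulVec hD (by simpa using hrelu)
    exact hv (by simp)
  have h1' : (vecMulVec x (A *ᵥ x + B *ᵥ w) + vecMulVec (A *ᵥ x + B *ᵥ w) x).PosSemidef := by
    convert h1 using 1
    simp only [transpose_vecMulVec, mul_vecMulVec, ← add_vecMulVec]
    exact add_comm _ _
  obtain ⟨l, hl, hy⟩ := exists_nonneg_smul_eq_of_forall_dotProduct_mul_nonneg hx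
    h1'.dotProduct_mul_dotProduct_nonneg_of_add
  exact ⟨x, w, l, hv₀, hw, hx, hl, hy, hrelu⟩

/-- If a nonzero rank-one positive semidefinite `H` satisfies the dual LMI constraints,
then `H = (x, w)(x, w)ᵀ` with `w ≥ 0`, `x ≠ 0`, and there is `λ ≥ 0` with
`A x + B w = λ x` and `w = Φ(C x + D w)`. -/
theorem dual_rank_one_extraction {n m : ℕ}
    (A : Matrix (Fin n) (Fin n) ℝ) (B : Matrix (Fin n) (Fin m) ℝ)
    (C : Matrix (Fin m) (Fin n) ℝ) (D : Matrix (Fin m) (Fin m) ℝ)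
    (hD : opNorm D < 1)
    (H11 : Matrix (Fin n) (Fin n) ℝ) (H12 : Matrix (Fin n) (Fin m) ℝ)
    (H22 : Matrix (Fin m) (Fin m) ℝ)
    (hPSD : (fromBlocks H11 H12 H12ᵀ H22).PosSemidef)
    (hne : fromBlocks H11 H12 H12ᵀ H22 ≠ 0)
    (hrank : (fromBlocks H11 H12 H12ᵀ H22).rank = 1)
    (h1 : (A * H11 + B * H12ᵀ + (A * H11 + B * H12ᵀ)ᵀ).PosSemidef)
    (h2 : ∀ i j, 0 ≤ (fromBlocks (-C) (1 - D) 0 (1 : Matrix (Fin m) (Fin m) ℝ) *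
        fromBlocks H11 H12 H12ᵀ H22 *
        (fromBlocks (-C) (1 - D) 0 (1 : Matrix (Fin m) (Fin m) ℝ))ᵀ) i j)
    (h3 : ∀ i : Fin m, ((-C) * H12 + (1 - D) * H22 : Matrix (Fin m) (Fin m) ℝ) i i = 0) :
    ∃ (x : Fin n → ℝ) (w : Fin m → ℝ) (l : ℝ),
      fromBlocks H11 H12 H12ᵀ H22 = vecMulVec (Sum.elim x w) (Sum.elim x w) ∧
      (∀ i, 0 ≤ w i) ∧ x ≠ 0 ∧ 0 ≤ l ∧
      A.mulVec x + B.mulVec w = l • x ∧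
      w = relu (C.mulVec x + D.mulVec w) :=
  dual_rank_one_extraction_general A B C D hD H11 H12 H22 hPSD hrank h1 h2 h3
end

section
/- Let A ∈ ℝ^{n×n}, B ∈ ℝ^{n×m}, C ∈ ℝ^{m×n}, D ∈ ℝ^{m×m} with ‖D‖ < 1, let x ∈ ℝ^n and λ ≥ 0, and suppose the function t ↦ e^{λ t} x is a solution of the feedback system Σ, with associated function w : [0,∞) → ℝ^m. Then w := w(0) satisfies A x + B w = λ x, w − (C x + D w) ≥ 0 entrywise, w ≥ 0 entrywise, and (w − (C x + D w)) ⊙ w = 0. -/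
open Matrix

/-! At `t = 0` the solution equals `x`, so the feedback relation says `w(0) = Φ(C x + D w(0))`,
whose entries satisfy the complementarity conditions of `a ↦ max a 0`, while comparing the
derivative of `t ↦ e^{λ t} x` at `0`, namely `λ x`, with the right-hand side of the ODE gives
`A x + B w(0) = λ x`. -/

lemma max_zero_sub_mul_max_zero {α : Type*} [Ring α] [LinearOrder α] (a : α) :
    (max a 0 - a) * max a 0 = 0 := by
  rcases le_total a 0 with ha | ha
  · simp [max_eq_right ha]
  · simp [max_eq_left ha]

lemma sub_nonneg_relu_apply {m : ℕ} (q : Fin m → ℝ) (i : Fin m) : 0 ≤ relu q i - q i :=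
  sub_nonneg.2 (le_max_left _ _)

lemma relu_apply_nonneg {m : ℕ} (q : Fin m → ℝ) (i : Fin m) : 0 ≤ relu q i :=
  le_max_right _ _

lemma relu_apply_sub_mul_relu_apply {m : ℕ} (q : Fin m → ℝ) (i : Fin m) :
    (relu q i - q i) * relu q i = 0 :=
  max_zero_sub_mul_max_zero (q i)

lemma hasDerivAt_exp_mul_smul {E : Type*} [NormedAddCommGroup E] [NormedSpace ℝ E]
    (l : ℝ) (x : E) (t : ℝ) :
    HasDerivAt (fun s : ℝ => Real.exp (l * s) • x) ((Real.exp (l * t) * l) • x) t := by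
  have hlin : HasDerivAt (fun s : ℝ => l * s) l t := by
    simpa using (hasDerivAt_id t).const_mul l
  exact ((Real.hasDerivAt_exp (l * t)).comp t hlin).smul_const x

theorem algebraic_conditions_of_exp_solution_general {n m : ℕ}
    (A : Matrix (Fin n) (Fin n) ℝ) (B : Matrix (Fin n) (Fin m) ℝ)
    (C : Matrix (Fin m) (Fin n) ℝ) (D : Matrix (Fin m) (Fin m) ℝ)
    (x : Fin n → ℝ) (l : ℝ)
    (w : ℝ → Fin m → ℝ)
    (hsol : ∀ t ≥ (0:ℝ),
      w t = relu (C.mulVec (Real.exp (l * t) • x) + D.mulVec (w t)) ∧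
      HasDerivAt (fun s : ℝ => Real.exp (l * s) • x)
        (A.mulVec (Real.exp (l * t) • x) + B.mulVec (w t)) t) :
    A.mulVec x + B.mulVec (w 0) = l • x ∧
    (∀ i, 0 ≤ w 0 i - (C.mulVec x + D.mulVec (w 0)) i) ∧
    (∀ i, 0 ≤ w 0 i) ∧
    (∀ i, (w 0 i - (C.mulVec x + D.mulVec (w 0)) i) * w 0 i = 0) := by
  obtain ⟨hfix, hderiv⟩ := hsol 0 le_rfl
  simp only [mul_zero, Real.exp_zero, one_smul] at hfix hderiv
  have hderiv_exp := hasDerivAt_exp_mul_smul l x 0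
  simp only [mul_zero, Real.exp_zero, one_mul] at hderiv_exp
  refine ⟨hderiv.unique hderiv_exp, fun i => ?_, fun i => ?_, fun i => ?_⟩ <;>
    rw [congrFun hfix i]
  exacts [sub_nonneg_relu_apply _ i, relu_apply_nonneg _ i, relu_apply_sub_mul_relu_apply _ i]

/-- If `t ↦ e^{λ t} x` is a solution of the feedback system `Σ` with associated function
`w : [0,∞) → ℝ^m`, then `w := w(0)` satisfies `A x + B w = λ x`,
`w − (C x + D w) ≥ 0` entrywise, `w ≥ 0` entrywise, and `(w − (C x + D w)) ⊙ w = 0`. -/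
theorem algebraic_conditions_of_exp_solution {n m : ℕ}
    (A : Matrix (Fin n) (Fin n) ℝ) (B : Matrix (Fin n) (Fin m) ℝ)
    (C : Matrix (Fin m) (Fin n) ℝ) (D : Matrix (Fin m) (Fin m) ℝ)
    (hD : opNorm D < 1)
    (x : Fin n → ℝ) (l : ℝ) (hl : 0 ≤ l)
    (w : ℝ → Fin m → ℝ)
    (hsol : ∀ t ≥ (0:ℝ),
      w t = relu (C.mulVec (Real.exp (l * t) • x) + D.mulVec (w t)) ∧
      HasDerivAt (fun s : ℝ => Real.exp (l * s) • x)
        (A.mulVec (Real.exp (l * t) • x) + B.mulVec (w t)) t) :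
    A.mulVec x + B.mulVec (w 0) = l • x ∧
    (∀ i, 0 ≤ w 0 i - (C.mulVec x + D.mulVec (w 0)) i) ∧
    (∀ i, 0 ≤ w 0 i) ∧
    (∀ i, (w 0 i - (C.mulVec x + D.mulVec (w 0)) i) * w 0 i = 0) :=
  algebraic_conditions_of_exp_solution_general A B C D x l w hsol
end

section
/- Let A ∈ ℝ^{n×n}, B ∈ ℝ^{n×m}, C ∈ ℝ^{m×n}, D ∈ ℝ^{m×m}, and suppose x ∈ ℝ^n, w ∈ ℝ^m and λ ≥ 0 satisfy: (x, w) ≠ 0, A x + B w = λ x, w − (C x + D w) ≥ 0 entrywise, w ≥ 0 entrywise, and (w − (C x + D w)) ⊙ w = 0. Then for every integer N ≥ 1, the matrices ℋ_i := λ^i (x, w)(x, w)^T ∈ S^{n+m}, i = 0, …, 2(N−1), satisfy all constraints of the N-th order LMI relaxation: the N×N block Hankel matrix H̃_N with (i,j) block ℋ_{i+j−2} equals v_N v_N^T with v_N = (x, w, λ x, λ w, …, λ^{N−1} x, λ^{N−1} w), hence is positive semidefinite and nonzero; each ℋ_i is positive semidefinite; [A B] ℋ_i = [I_n 0] ℋ_{i+1}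 for i = 0,…,2N−3; [A B] ℋ_{2(N−1)} [I_n 0]^T + ([A B] ℋ_{2(N−1)} [I_n 0]^T)^T is positive semidefinite; the matrix [[-C, I_m − D],[0, I_m]] ℋ_i [[-C, I_m − D],[0, I_m]]^T has all entries nonnegative for each i; and every diagonal entry of [−C, I_m − D] ℋ_i [0, I_m]^T is zero for each i. -/
open Matrix

/-- The `N×N` block Hankel matrix whose `(i,j)` block is `H (i+j)`. -/
def hankelBlock {n m : ℕ} (H : ℕ → Matrix (Fin n ⊕ Fin m) (Fin n ⊕ Fin m) ℝ) (N : ℕ) :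
    Matrix (Fin N × (Fin n ⊕ Fin m)) (Fin N × (Fin n ⊕ Fin m)) ℝ :=
  fun p q => H ((p.1 : ℕ) + (q.1 : ℕ)) p.2 q.2

/-!
If `v = (x, w)` is a solution, the moment sequence `ℋ_i = λ^i v vᵀ` is that of the point mass
at `(λ, v)`. Every constraint of the relaxation is linear in `ℋ_i`, and evaluated on `λ^i v vᵀ`
it becomes `λ^i (M v)(N v)ᵀ` for the constraint's matrices `M`, `N`: the Hankel matrix is the
Gram matrix `v_N v_Nᵀ`, the shift constraint is `A x + B w = λ x`, and the two complementarity
constraints are the sign conditions and `(w - C x - D w) ⊙ w = 0`.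
-/

section GeometricMoments

variable {ι : Type*}

def geometricMoments (c : ℝ) (v : ι → ℝ) (i : ℕ) : Matrix ι ι ℝ :=
  c ^ i • vecMulVec v v

def geometricStack (c : ℝ) (v : ι → ℝ) (N : ℕ) : Fin N × ι → ℝ :=
  fun p => c ^ (p.1 : ℕ) * v p.2

theorem posSemidef_vecMulVec_self [Finite ι] (v : ι → ℝ) : (vecMulVec v v).PosSemidef := by
  simpa using posSemidef_vecMulVec_self_star v

theorem posSemidef_geometricMoments [Finite ι] {c : ℝ} (hc : 0 ≤ c) (v : ι → ℝ) (i : ℕ) :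
    (geometricMoments c v i).PosSemidef :=
  (posSemidef_vecMulVec_self v).smul (pow_nonneg hc i)

theorem mul_geometricMoments [Fintype ι] {κ : Type*} (M : Matrix κ ι ℝ) (c : ℝ) (v : ι → ℝ)
    (i : ℕ) : M * geometricMoments c v i = c ^ i • vecMulVec (M *ᵥ v) v := by
  rw [geometricMoments, Matrix.mul_smul, mul_vecMulVec]

theorem mul_geometricMoments_mul_transpose [Fintype ι] {κ μ : Type*} (M : Matrix κ ι ℝ)
    (K : Matrix μ ι ℝ) (c : ℝ) (v : ι → ℝ) (i : ℕ) :
    M * geometricMoments c v i * Kᵀ = c ^ i • vecMulVec (M *ᵥ v) (K *ᵥ v) := by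
  rw [mul_geometricMoments, Matrix.smul_mul, vecMulVec_mul, vecMul_transpose]

theorem mul_geometricMoments_eq_of_mulVec_eq [Fintype ι] {κ : Type*} {M K : Matrix κ ι ℝ}
    {c : ℝ} {v : ι → ℝ} (hMK : M *ᵥ v = c • K *ᵥ v) (i : ℕ) :
    M * geometricMoments c v i = K * geometricMoments c v (i + 1) := by
  rw [mul_geometricMoments, mul_geometricMoments, hMK, smul_vecMulVec, smul_smul, pow_succ]

theorem posSemidef_mul_geometricMoments_mul_transpose_add_transpose [Fintype ι] {κ : Type*}
    [Finite κ] {M K : Matrix κ ι ℝ} {c : ℝ} (hc : 0 ≤ c) {v : ι → ℝ}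
    (hMK : M *ᵥ v = c • K *ᵥ v) (i : ℕ) :
    (M * geometricMoments c v i * Kᵀ + (M * geometricMoments c v i * Kᵀ)ᵀ).PosSemidef := by
  have hpsd : (M * geometricMoments c v i * Kᵀ).PosSemidef := by
    rw [mul_geometricMoments_mul_transpose, hMK, smul_vecMulVec, smul_smul]
    exact (posSemidef_vecMulVec_self _).smul (mul_nonneg (pow_nonneg hc i) hc)
  exact hpsd.add hpsd.transpose

theorem mul_geometricMoments_mul_transpose_nonneg [Fintype ι] {κ : Type*} {M : Matrix κ ι ℝ}
    {c : ℝ} (hc : 0 ≤ c) {v : ι → ℝ} (hMv : ∀ a, 0 ≤ (M *ᵥ v) a) (i : ℕ) (a b : κ) :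
    0 ≤ (M * geometricMoments c v i * Mᵀ) a b := by
  rw [mul_geometricMoments_mul_transpose, Matrix.smul_apply, vecMulVec_apply, smul_eq_mul]
  exact mul_nonneg (pow_nonneg hc i) (mul_nonneg (hMv a) (hMv b))

theorem mul_geometricMoments_mul_transpose_diag_eq_zero [Fintype ι] {κ : Type*}
    {M K : Matrix κ ι ℝ} {c : ℝ} {v : ι → ℝ} (hMK : ∀ j, (M *ᵥ v) j * (K *ᵥ v) j = 0) (i : ℕ)
    (j : κ) : (M * geometricMoments c v i * Kᵀ) j j = 0 := by
  rw [mul_geometricMoments_mul_transpose, Matrix.smul_apply, vecMulVec_apply, hMK, smul_zero]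

theorem geometricStack_ne_zero {c : ℝ} {v : ι → ℝ} (hv : v ≠ 0) {N : ℕ} (hN : 0 < N) :
    geometricStack c v N ≠ 0 := by
  obtain ⟨k, hk⟩ := Function.ne_iff.mp hv
  exact Function.ne_iff.mpr ⟨(⟨0, hN⟩, k), by simpa [geometricStack] using hk⟩

theorem hankelBlock_geometricMoments {n m : ℕ} (c : ℝ) (v : Fin n ⊕ Fin m → ℝ) (N : ℕ) :
    hankelBlock (geometricMoments c v) N =
      vecMulVec (geometricStack c v N) (geometricStack c v N) := by
  ext ⟨i, a⟩ ⟨j, b⟩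
  simp only [hankelBlock, geometricMoments, geometricStack, Matrix.smul_apply, vecMulVec_apply,
    smul_eq_mul, pow_add]
  ring

end GeometricMoments

section BlockMulVec

variable {R ι κ : Type*} [Ring R] [Fintype ι] [Fintype κ] (C : Matrix κ ι R) (D : Matrix κ κ R)
  (x : ι → R) (w : κ → R)

theorem fromCols_one_zero_mulVec_sumElim [DecidableEq ι] :
    fromCols (1 : Matrix ι ι R) (0 : Matrix ι κ R) *ᵥ Sum.elim x w = x := by
  simp

theorem fromCols_zero_one_mulVec_sumElim [DecidableEq κ] :
    fromCols (0 : Matrix κ ι R) 1 *ᵥ Sum.elim x w = w := by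
  simp

theorem fromCols_neg_one_sub_mulVec_sumElim [DecidableEq κ] :
    fromCols (-C) (1 - D) *ᵥ Sum.elim x w = w - (C *ᵥ x + D *ᵥ w) := by
  rw [fromCols_mulVec_sumElim, neg_mulVec, sub_mulVec, one_mulVec]
  abel

theorem fromBlocks_neg_one_sub_zero_one_mulVec_sumElim [DecidableEq κ] :
    fromBlocks (-C) (1 - D) (0 : Matrix κ ι R) 1 *ᵥ Sum.elim x w =
      Sum.elim (w - (C *ᵥ x + D *ᵥ w)) w := by
  rw [fromBlocks_mulVec]
  simp only [Sum.elim_comp_inl, Sum.elim_comp_inr, zero_mulVec, one_mulVec, zero_add]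
  rw [← fromCols_mulVec_sumElim, fromCols_neg_one_sub_mulVec_sumElim]

end BlockMulVec

/-- If `(x, w) ≠ 0`, `A x + B w = λ x`, `w − (C x + D w) ≥ 0`, `w ≥ 0` and
`(w − (C x + D w)) ⊙ w = 0` with `λ ≥ 0`, then the matrices `ℋ_i = λ^i (x,w)(x,w)ᵀ`
satisfy all constraints of the `N`-th order LMI relaxation. -/
theorem algebraic_solution_feasible_for_relaxation {n m : ℕ}
    (A : Matrix (Fin n) (Fin n) ℝ) (B : Matrix (Fin n) (Fin m) ℝ)
    (C : Matrix (Fin m) (Fin n) ℝ) (D : Matrix (Fin m) (Fin m) ℝ)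
    (x : Fin n → ℝ) (w : Fin m → ℝ) (lam : ℝ) (hlam : 0 ≤ lam)
    (hne : Sum.elim x w ≠ 0)
    (heig : A.mulVec x + B.mulVec w = lam • x)
    (hge1 : ∀ i, 0 ≤ w i - (C.mulVec x + D.mulVec w) i)
    (hge2 : ∀ i, 0 ≤ w i)
    (hhad : ∀ i, (w i - (C.mulVec x + D.mulVec w) i) * w i = 0)
    (N : ℕ) (hN : 1 ≤ N)
    (H : ℕ → Matrix (Fin n ⊕ Fin m) (Fin n ⊕ Fin m) ℝ)
    (hH : ∀ i, H i = lam ^ i • vecMulVec (Sum.elim x w) (Sum.elim x w)) :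
    hankelBlock H N =
      vecMulVec (fun p : Fin N × (Fin n ⊕ Fin m) => lam ^ (p.1 : ℕ) * Sum.elim x w p.2)
        (fun p : Fin N × (Fin n ⊕ Fin m) => lam ^ (p.1 : ℕ) * Sum.elim x w p.2) ∧
    (hankelBlock H N).PosSemidef ∧
    hankelBlock H N ≠ 0 ∧
    (∀ i, i + 2 ≤ 2 * N → (H i).PosSemidef) ∧
    (∀ i, i + 3 ≤ 2 * N →
      fromCols A B * H i = fromCols (1 : Matrix (Fin n) (Fin n) ℝ) 0 * H (i + 1)) ∧
    (fromCols A B * H (2 * (N - 1)) * (fromCols (1 : Matrix (Fin n) (Fin n) ℝ) 0)ᵀ +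
      (fromCols A B * H (2 * (N - 1)) *
        (fromCols (1 : Matrix (Fin n) (Fin n) ℝ) 0)ᵀ)ᵀ).PosSemidef ∧
    (∀ i, i + 2 ≤ 2 * N → ∀ a b,
      0 ≤ (fromBlocks (-C) (1 - D) 0 (1 : Matrix (Fin m) (Fin m) ℝ) * H i *
        (fromBlocks (-C) (1 - D) 0 (1 : Matrix (Fin m) (Fin m) ℝ))ᵀ) a b) ∧
    (∀ i, i + 2 ≤ 2 * N → ∀ j : Fin m,
      (fromCols (-C) (1 - D) * H i *
        (fromCols (0 : Matrix (Fin m) (Fin n) ℝ) 1)ᵀ : Matrix (Fin m) (Fin m) ℝ) j j = 0) := by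
  obtain rfl : H = geometricMoments lam (Sum.elim x w) := funext hH
  have hshift : fromCols A B *ᵥ Sum.elim x w =
      lam • fromCols (1 : Matrix (Fin n) (Fin n) ℝ) 0 *ᵥ Sum.elim x w := by
    rw [fromCols_mulVec_sumElim, heig, fromCols_one_zero_mulVec_sumElim]
  have hslack : ∀ c,
      0 ≤ (fromBlocks (-C) (1 - D) 0 (1 : Matrix (Fin m) (Fin m) ℝ) *ᵥ Sum.elim x w) c := by
    rw [fromBlocks_neg_one_sub_zero_one_mulVec_sumElim]
    rintro (j | j)
    exacts [hge1 j, hge2 j]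
  have hcompl : ∀ j, (fromCols (-C) (1 - D) *ᵥ Sum.elim x w) j *
      (fromCols (0 : Matrix (Fin m) (Fin n) ℝ) 1 *ᵥ Sum.elim x w) j = 0 := by
    rw [fromCols_neg_one_sub_mulVec_sumElim, fromCols_zero_one_mulVec_sumElim]
    exact hhad
  have hhankel := hankelBlock_geometricMoments lam (Sum.elim x w) N
  -- Some products in the statement elaborate through the `CStarMatrix` `HMul` instance, which
  -- agrees with `Matrix` multiplication only up to unfolding, so `rw` would not fire here.
  exact ⟨hhankel, hhankel ▸ posSemidef_vecMulVec_self _,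
    hhankel ▸ vecMulVec_ne_zero (geometricStack_ne_zero hne hN) (geometricStack_ne_zero hne hN),
    fun i _ => posSemidef_geometricMoments hlam _ i,
    fun i _ => mul_geometricMoments_eq_of_mulVec_eq hshift i,
    posSemidef_mul_geometricMoments_mul_transpose_add_transpose hlam hshift _,
    fun i _ => mul_geometricMoments_mul_transpose_nonneg hlam hslack i,
    fun i _ => mul_geometricMoments_mul_transpose_diag_eq_zero hcompl i⟩
end

section
/- Let A ∈ ℝ^{n×n}, B ∈ ℝ^{n×m}, C ∈ ℝ^{m×n}, D ∈ ℝ^{m×m} with ‖D‖ < 1, and let N_1 ≤ N_2 be positive integers. If the N_2-th order LMI relaxation is feasible, i.e. there exist ℋ_0, …, ℋ_{2(N_2−1)} ∈ S^{n+m} such that the N_2×N_2 block Hankel matrix with (i,j) block ℋ_{i+j−2} is positive semidefinite and nonzero, each ℋ_i is positive semidefinite, [A B] ℋ_i = [I_n 0] ℋ_{i+1} for i = 0,…,2N_2−3, [A B] ℋ_{2(N_2−1)} [I_n 0]^T + ([A B] ℋ_{2(N_2−1)} [I_n 0]^T)^T is positive semidefinite, the matrix [[-C, I_m − D],[0, I_m]]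 ℋ_i [[-C, I_m − D],[0, I_m]]^T has all entries nonnegative for each i, and every diagonal entry of [−C, I_m − D] ℋ_i [0, I_m]^T is zero for each i, then the N_1-th order LMI relaxation (the same set of conditions with N_2 replaced by N_1) is also feasible. -/
/-!
The `N₁`-th relaxation is obtained from the `N₂`-th one by shifting the moment sequence,
`k ↦ H (k + 2 s)` with `s ≤ N₂ - N₁`: the shifted Hankel matrix is a principal submatrix of
the original one, and every pointwise condition is inherited. Taking `s` no larger than the
block index of a nonzero diagonal entry keeps the shifted Hankel matrix nonzero. If
`s < N₂ - N₁`, the trailing condition is no longer the original one, but the shift identity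
`[A B] H_j = E H_{j+1}`, `E = [I 0]`, rewrites it as `E H_{j+1} Eᵀ + (E H_{j+1} Eᵀ)ᵀ`
with `H_{j+1} ⪰ 0`.
-/

open Matrix

/-- Feasibility of the `N`-th order LMI relaxation. -/
def NthOrderRelaxationFeasible {n m : ℕ}
    (A : Matrix (Fin n) (Fin n) ℝ) (B : Matrix (Fin n) (Fin m) ℝ)
    (C : Matrix (Fin m) (Fin n) ℝ) (D : Matrix (Fin m) (Fin m) ℝ) (N : ℕ) : Prop :=
  ∃ H : ℕ → Matrix (Fin n ⊕ Fin m) (Fin n ⊕ Fin m) ℝ,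
    (hankelBlock H N).PosSemidef ∧
    hankelBlock H N ≠ 0 ∧
    (∀ i, i + 2 ≤ 2 * N → (H i).PosSemidef) ∧
    (∀ i, i + 3 ≤ 2 * N →
      fromCols A B * H i = fromCols (1 : Matrix (Fin n) (Fin n) ℝ) 0 * H (i + 1)) ∧
    (fromCols A B * H (2 * (N - 1)) * (fromCols (1 : Matrix (Fin n) (Fin n) ℝ) 0)ᵀ +
      (fromCols A B * H (2 * (N - 1)) *
        (fromCols (1 : Matrix (Fin n) (Fin n) ℝ) 0)ᵀ)ᵀ).PosSemidef ∧
    (∀ i, i + 2 ≤ 2 * N → ∀ a b,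
      0 ≤ (fromBlocks (-C) (1 - D) 0 (1 : Matrix (Fin m) (Fin m) ℝ) * H i *
        (fromBlocks (-C) (1 - D) 0 (1 : Matrix (Fin m) (Fin m) ℝ))ᵀ) a b) ∧
    (∀ i, i + 2 ≤ 2 * N → ∀ j : Fin m,
      (fromCols (-C) (1 - D) * H i *
        (fromCols (0 : Matrix (Fin m) (Fin n) ℝ) 1)ᵀ : Matrix (Fin m) (Fin m) ℝ) j j = 0)

theorem Matrix.PosSemidef.exists_diag_ne_zero {ι : Type*} [Fintype ι] {M : Matrix ι ι ℝ}
    (hM : M.PosSemidef) (hne : M ≠ 0) : ∃ i, M i i ≠ 0 := by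
  obtain ⟨i, -, hi⟩ := Finset.exists_ne_zero_of_sum_ne_zero (mt hM.trace_eq_zero_iff.mp hne)
  exact ⟨i, hi⟩

theorem Matrix.PosSemidef.mul_mul_transpose_add_transpose {ι κ : Type*} [Fintype ι] [Fintype κ]
    {P : Matrix ι ι ℝ} (hP : P.PosSemidef) (E : Matrix κ ι ℝ) :
    (E * P * Eᵀ + (E * P * Eᵀ)ᵀ).PosSemidef := by
  have hEP : (E * P * Eᵀ).PosSemidef := by
    simpa only [conjTranspose_eq_transpose_of_trivial] using hP.mul_mul_conjTranspose_same E
  rw [(isHermitian_iff_isSymm.mp hEP.isHermitian).eq]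
  exact hEP.add hEP

section Shift

variable {n m : ℕ} (H : ℕ → Matrix (Fin n ⊕ Fin m) (Fin n ⊕ Fin m) ℝ) {N N' s : ℕ}

theorem hankelBlock_shift_eq_submatrix (h : N + s ≤ N') :
    hankelBlock (fun k => H (k + 2 * s)) N =
      (hankelBlock H N').submatrix (fun p => (⟨p.1 + s, by omega⟩, p.2))
        (fun p => (⟨p.1 + s, by omega⟩, p.2)) := by
  ext p q
  simp only [hankelBlock, submatrix_apply]
  congr 1
  omega

theorem Matrix.PosSemidef.hankelBlock_shift (hH : (hankelBlock H N').PosSemidef)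
    (h : N + s ≤ N') :
    (hankelBlock (fun k => H (k + 2 * s)) N).PosSemidef := by
  rw [hankelBlock_shift_eq_submatrix H h]
  exact hH.submatrix _

theorem hankelBlock_shift_ne_zero {i : ℕ} {a : Fin n ⊕ Fin m} (ha : H (i + i) a a ≠ 0)
    (hs : s ≤ i) (hi : i < N + s) : hankelBlock (fun k => H (k + 2 * s)) N ≠ 0 := by
  intro h0
  have hentry := congrFun (congrFun h0 (⟨i - s, by omega⟩, a)) (⟨i - s, by omega⟩, a)
  simp only [hankelBlock, Matrix.zero_apply] at hentry
  rw [show i - s + (i - s) + 2 * s = i + i by omega] at hentry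
  exact ha hentry

end Shift

theorem relaxation_feasibility_antitone_general {n m : ℕ}
    (A : Matrix (Fin n) (Fin n) ℝ) (B : Matrix (Fin n) (Fin m) ℝ)
    (C : Matrix (Fin m) (Fin n) ℝ) (D : Matrix (Fin m) (Fin m) ℝ)
    (N₁ N₂ : ℕ) (hN₁ : 1 ≤ N₁) (hle : N₁ ≤ N₂)
    (hfeas : NthOrderRelaxationFeasible A B C D N₂) :
    NthOrderRelaxationFeasible A B C D N₁ := by
  obtain ⟨H, hHankel, hne, hPSD, hshift, htrail, hnonneg, hdiag⟩ := hfeas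
  obtain ⟨⟨i, a⟩, ha⟩ := hHankel.exists_diag_ne_zero hne
  set s := min (N₂ - N₁) i with hs_def
  have hsN : N₁ + s ≤ N₂ := by omega
  refine ⟨fun k => H (k + 2 * s), hHankel.hankelBlock_shift H hsN,
    hankelBlock_shift_ne_zero H (i := i) ha (min_le_right _ _) (by omega),
    fun k hk => hPSD _ (by omega),
    fun k hk => by simpa only [add_right_comm] using hshift (k + 2 * s) (by omega), ?_,
    fun k hk => hnonneg _ (by omega), fun k hk => hdiag _ (by omega)⟩
  beta_reduce
  rcases Nat.lt_or_ge s (N₂ - N₁) with hlt | hge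
  · rw [hshift _ (by omega)]
    exact (hPSD _ (by omega)).mul_mul_transpose_add_transpose _
  · rwa [show 2 * (N₁ - 1) + 2 * s = 2 * (N₂ - 1) by omega]

/-- If the `N₂`-th order LMI relaxation is feasible and `1 ≤ N₁ ≤ N₂`, then the `N₁`-th
order LMI relaxation is also feasible. -/
theorem relaxation_feasibility_antitone {n m : ℕ}
    (A : Matrix (Fin n) (Fin n) ℝ) (B : Matrix (Fin n) (Fin m) ℝ)
    (C : Matrix (Fin m) (Fin n) ℝ) (D : Matrix (Fin m) (Fin m) ℝ)
    (hD : opNorm D < 1)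
    (N₁ N₂ : ℕ) (hN₁ : 1 ≤ N₁) (hle : N₁ ≤ N₂)
    (hfeas : NthOrderRelaxationFeasible A B C D N₂) :
    NthOrderRelaxationFeasible A B C D N₁ :=
  relaxation_feasibility_antitone_general A B C D N₁ N₂ hN₁ hle hfeas
end
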